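/- Suppose ν has a generating sequence Q_0 = X, Q_1 = Y, Q_2, … in which every Q_l is an eigenfunction for H_{i,j,t,x}. Then S^{R_𝔪}(ν) is a finitely generated module over the subsemigroup S^{(A_{i,j,t,x})_𝔫}(ν) if and only if there exists N ∈ ℤ_{>0} such that Q_r ∈ A_{i,j,t,x} for all r ≥ N. -/

import Mathlib

open MvPolynomial Finset Pointwise

noncomputable section

namespace DuttaPaper

/-- The polynomial ring `K[X,Y]`, with `X = X 0` and `Y = X 1`. -/
abbrev Poly (K : Type) [Field K] : Type := MvPolynomial (Fin 2) K

/-- The rational function field `K(X,Y)`. -/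
abbrev RF (K : Type) [Field K] : Type := FractionRing (Poly K)

variable {K : Type} [Field K]

/-- The `K`-algebra endomorphism of `K[X,Y]` sending `X ↦ u • X`, `Y ↦ v • Y`;
this is the action of `(u,v) ∈ 𝕌_m × 𝕌_n` on `K[X,Y]`. -/
def act (u v : K) : Poly K →ₐ[K] Poly K :=
  MvPolynomial.aeval ![MvPolynomial.C u * MvPolynomial.X 0,
    MvPolynomial.C v * MvPolynomial.X 1]

/-- Membership in the set `H_{i,j,t,x} = {(α^{a i}, β^{b j}) : b ≡ a x (mod t)} ⊆ K × K`. -/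
def Hmem (α β : K) (i j t x : ℕ) (p : K × K) : Prop :=
  ∃ a b : ℤ, b ≡ a * (x : ℤ) [ZMOD (t : ℤ)] ∧
    p = (α ^ (a * (i : ℤ)), β ^ (b * (j : ℤ)))

/-- `f ∈ K[X,Y]` is an eigenfunction for `H_{i,j,t,x}`. -/
def IsEigen (α β : K) (i j t x : ℕ) (f : Poly K) : Prop :=
  ∀ p : K × K, Hmem α β i j t x p → ∃ lam : K, act p.1 p.2 f = lam • f

/-- `f ∈ K[X,Y]` belongs to the invariant ring `A_{i,j,t,x} = K[X,Y]^{H_{i,j,t,x}}`. -/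
def Invariant (α β : K) (i j t x : ℕ) (f : Poly K) : Prop :=
  ∀ p : K × K, Hmem α β i j t x p → act p.1 p.2 f = f

/-- A `ℚ`-valued (rational rank 1) valuation on a field `L`: the data of the values of the
nonzero elements (the value of `0` is irrelevant). -/
structure RatVal (L : Type) [Field L] where
  v : L → ℚ
  v_mul : ∀ a b : L, a ≠ 0 → b ≠ 0 → v (a * b) = v a + v b
  v_add : ∀ a b : L, a ≠ 0 → b ≠ 0 → a + b ≠ 0 → min (v a) (v b) ≤ v (a + b)

/-- Value of a polynomial under a valuation of `K(X,Y)`. -/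
def vP (ν : RatVal (RF K)) (f : Poly K) : ℚ :=
  ν.v (algebraMap (Poly K) (RF K) f)

/-- `ν` dominates `R_𝔪 = K[X,Y]_{(X,Y)}` : `ν ≥ 0` on `R_𝔪` and `ν > 0` on its maximal
ideal (expressed on the level of polynomials). -/
def DominatesRm (ν : RatVal (RF K)) : Prop :=
  (∀ f : Poly K, f ≠ 0 → 0 ≤ vP ν f) ∧
  (∀ f : Poly K, f ≠ 0 → MvPolynomial.constantCoeff f = 0 → 0 < vP ν f)

/-- `ν` is non-discrete: its value group is not a cyclic subgroup of `ℚ`. -/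
def Nondiscrete (ν : RatVal (RF K)) : Prop :=
  ¬ ∃ g : ℚ, ∀ z : RF K, z ≠ 0 → ∃ k : ℤ, ν.v z = (k : ℚ) * g

/-- Data of a candidate generating sequence: the polynomials `Q_l` and the numbers `m̄_l`. -/
structure GSData (K : Type) [Field K] where
  Q : ℕ → Poly K
  mbar : ℕ → ℕ

/-- `γ_l = ν(Q_l)`. -/
def GSData.γ (G : GSData K) (ν : RatVal (RF K)) (l : ℕ) : ℚ := vP ν (G.Q l)

/-- `d(l) = m̄_1 ⋯ m̄_{l-1}` (so `d(1) = 1`). -/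
def GSData.d (G : GSData K) (l : ℕ) : ℕ := ∏ k ∈ Finset.Icc 1 (l - 1), G.mbar k

/-- An exponent vector `e` is admissible when `e k < m̄_k` for all `k ≥ 1`. -/
def Adm (G : GSData K) (e : ℕ →₀ ℕ) : Prop := ∀ k, 1 ≤ k → e k < G.mbar k

/-- The monomial `X^{e 0} Q_1^{e 1} Q_2^{e 2} ⋯` in the generating sequence. -/
def Pmon (G : GSData K) (e : ℕ →₀ ℕ) : Poly K := e.prod fun k a => G.Q k ^ a

/-- The value `Σ_k e k • γ_k` of such a monomial. -/
def evalγ (ν : RatVal (RF K)) (G : GSData K) (e : ℕ →₀ ℕ) : ℚ :=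
  e.sum fun k a => (a : ℚ) * G.γ ν k

/-- `(Q_l)_{l≥0}` is a generating sequence for `ν` in `K[X,Y]` (properties (1)–(4) of
Section 2 of the paper, for the algorithm of Cutkosky–Vinh). -/
structure IsGenSeq (ν : RatVal (RF K)) (G : GSData K) : Prop where
  hQ0 : G.Q 0 = MvPolynomial.X 0
  hQ1 : G.Q 1 = MvPolynomial.X 1
  /-- `m̄_l ≥ 1`. -/
  hmbar_pos : ∀ l, 1 ≤ l → 0 < G.mbar l
  /-- `m̄_l γ_l ∈ G(γ_0, …, γ_{l-1})`. -/
  hmbar_mem : ∀ l, 1 ≤ l → ∃ c : ℕ → ℤ,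
      (G.mbar l : ℚ) * G.γ ν l = ∑ k ∈ Finset.range l, (c k : ℚ) * G.γ ν k
  /-- `m̄_l` is minimal with this property. -/
  hmbar_min : ∀ l, 1 ≤ l → ∀ q : ℕ, 0 < q →
      (∃ c : ℕ → ℤ, (q : ℚ) * G.γ ν l = ∑ k ∈ Finset.range l, (c k : ℚ) * G.γ ν k) →
      G.mbar l ≤ q
  /-- (1) `γ_{l+1} > m̄_l γ_l`. -/
  hgrowth : ∀ l, 1 ≤ l → (G.mbar l : ℚ) * G.γ ν l < G.γ ν (l + 1)
  /-- (2) `Q_l = Y^{d(l)} + (terms of lower Y-degree)`. -/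
  hmonic : ∀ l, 1 ≤ l →
      G.Q l - MvPolynomial.X 1 ^ G.d l = 0 ∨
      MvPolynomial.degreeOf 1 (G.Q l - MvPolynomial.X 1 ^ G.d l) < G.d l
  /-- (3), existence and uniqueness of the expansion of any nonzero `f` in terms of the
  admissible monomials `X^{e 0} Q_1^{e 1} ⋯ Q_r^{e r}`, `e k < m̄_k` for `k ≥ 1`. -/
  hexpand : ∀ f : Poly K, f ≠ 0 →
      ∃! c : (ℕ →₀ ℕ) →₀ K,
        (∀ e ∈ c.support, Adm G e) ∧
        f = c.sum fun e a => MvPolynomial.C a * Pmon G e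
  /-- (3), the nonzero terms of the expansion have pairwise distinct values and
  `ν(f)` is the minimum of those values. -/
  hval : ∀ f : Poly K, f ≠ 0 → ∀ c : (ℕ →₀ ℕ) →₀ K,
      (∀ e ∈ c.support, Adm G e) →
      f = (c.sum fun e a => MvPolynomial.C a * Pmon G e) →
      (∀ e ∈ c.support, ∀ e' ∈ c.support, evalγ ν G e = evalγ ν G e' → e = e') ∧
      ∃ e₀ ∈ c.support, vP ν f = evalγ ν G e₀ ∧
        ∀ e ∈ c.support, evalγ ν G e₀ ≤ evalγ ν G e
  /-- (4) `Q_{l+1} = Q_l^{m̄_l} - λ_l X^{c_0} Y^{c_1} Q_2^{c_2} ⋯ Q_{l-1}^{c_{l-1}}` with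
  `0 ≤ c_k < m̄_k` for `k ≥ 1` and `m̄_l γ_l = Σ_{k<l} c_k γ_k`. -/
  hrec : ∀ l, 1 ≤ l → ∃ lam : K, lam ≠ 0 ∧ ∃ cc : ℕ → ℕ,
      (∀ k, 1 ≤ k → k < l → cc k < G.mbar k) ∧
      G.Q (l + 1) =
        G.Q l ^ G.mbar l - MvPolynomial.C lam * ∏ k ∈ Finset.range l, G.Q k ^ cc k ∧
      (G.mbar l : ℚ) * G.γ ν l = ∑ k ∈ Finset.range l, (cc k : ℚ) * G.γ ν k

/-- The valuation semigroup `S^{R_𝔪}(ν) = {ν(h) : 0 ≠ h ∈ R_𝔪}`. -/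
def SRm (ν : RatVal (RF K)) : Set ℚ :=
  {q | ∃ f g : Poly K, f ≠ 0 ∧ MvPolynomial.constantCoeff g ≠ 0 ∧
    q = vP ν f - vP ν g}

/-- The valuation semigroup `S^{(A_{i,j,t,x})_𝔫}(ν)` of the invariant ring localized at
`𝔫 = (X,Y) ∩ A_{i,j,t,x}`. -/
def SA (ν : RatVal (RF K)) (α β : K) (i j t x : ℕ) : Set ℚ :=
  {q | ∃ f g : Poly K, f ≠ 0 ∧ Invariant α β i j t x f ∧ Invariant α β i j t x g ∧
    MvPolynomial.constantCoeff g ≠ 0 ∧ q = vP ν f - vP ν g}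

/-- `S` is a finitely generated module over the subsemigroup `T`:
`S = {s_1, …, s_k} + T` for finitely many `s_i ∈ S`. -/
def FGover (S T : Set ℚ) : Prop :=
  ∃ F : Finset ℚ, (F : Set ℚ) ⊆ S ∧ S = (F : Set ℚ) + T


section Aux
variable {ν : RatVal (RF K)}

lemma v_one_eq (ν : RatVal (RF K)) : ν.v 1 = 0 := by
  have h := ν.v_mul 1 1 one_ne_zero one_ne_zero
  rw [mul_one] at h; linarith

lemma v_neg_one_eq (ν : RatVal (RF K)) : ν.v (-1) = 0 := by
  have h := ν.v_mul (-1) (-1) (by simp) (by simp)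
  simp [v_one_eq] at h; linarith

lemma v_neg (ν : RatVal (RF K)) (a : RF K) (ha : a ≠ 0) : ν.v (-a) = ν.v a := by
  have h := ν.v_mul (-1) a (by simp) ha
  rw [neg_one_mul] at h; rw [h, v_neg_one_eq]; ring

lemma aMap_ne {f : Poly K} (hf : f ≠ 0) : algebraMap (Poly K) (RF K) f ≠ 0 := by
  simpa using (IsFractionRing.to_map_eq_zero_iff (K := RF K)).not.mpr hf

lemma vP_mul (ν : RatVal (RF K)) {f g : Poly K} (hf : f ≠ 0) (hg : g ≠ 0) :
    vP ν (f * g) = vP ν f + vP ν g := by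
  unfold vP; rw [map_mul]; exact ν.v_mul _ _ (aMap_ne hf) (aMap_ne hg)

lemma vP_one (ν : RatVal (RF K)) : vP ν 1 = 0 := by
  unfold vP; rw [map_one]; exact v_one_eq ν

lemma vP_pow (ν : RatVal (RF K)) {f : Poly K} (hf : f ≠ 0) (c : ℕ) :
    vP ν (f ^ c) = (c : ℚ) * vP ν f := by
  induction c with
  | zero => simp [vP_one]
  | succ c ih =>
      rw [pow_succ, vP_mul ν (pow_ne_zero _ hf) hf, ih]; push_cast; ring

lemma vP_prod (ν : RatVal (RF K)) {ι : Type*} (s : Finset ι) (f : ι → Poly K)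
    (hf : ∀ i ∈ s, f i ≠ 0) :
    vP ν (∏ i ∈ s, f i) = ∑ i ∈ s, vP ν (f i) := by
  classical
  induction s using Finset.induction_on with
  | empty => simp [vP_one]
  | @insert a s' hnot ih =>
      rw [Finset.prod_insert hnot, Finset.sum_insert hnot,
        vP_mul ν (hf a (Finset.mem_insert_self a s'))
          (Finset.prod_ne_zero_iff.2 fun i hi => hf i (Finset.mem_insert_of_mem hi)),
        ih fun i hi => hf i (Finset.mem_insert_of_mem hi)]

lemma vP_unit (hdom : DominatesRm ν) {g : Poly K} (hg : MvPolynomial.constantCoeff g ≠ 0) :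
    vP ν g = 0 := by
  have hgne : g ≠ 0 := fun h => hg (by simp [h])
  have hC : vP ν (MvPolynomial.C (MvPolynomial.constantCoeff g)) = 0 := by
    have h1 : vP ν (MvPolynomial.C (MvPolynomial.constantCoeff g)) +
        vP ν (MvPolynomial.C (MvPolynomial.constantCoeff g)⁻¹) = 0 := by
      rw [← vP_mul ν (by simpa using hg) (by simpa using inv_ne_zero hg), ← MvPolynomial.C_mul,
        mul_inv_cancel₀ hg, MvPolynomial.C_1, vP_one]
    have h2 := hdom.1 _ (show (MvPolynomial.C (MvPolynomial.constantCoeff g) : Poly K) ≠ 0 by simpa using hg)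
    have h3 := hdom.1 _ (show (MvPolynomial.C (MvPolynomial.constantCoeff g)⁻¹ : Poly K) ≠ 0 by simpa using inv_ne_zero hg)
    linarith
  by_cases hrest : g - MvPolynomial.C (MvPolynomial.constantCoeff g) = 0
  · have : g = MvPolynomial.C (MvPolynomial.constantCoeff g) := by
      linear_combination (norm := ring_nf) hrest
    rw [this]; exact hC
  · have hrpos : 0 < vP ν (g - MvPolynomial.C (MvPolynomial.constantCoeff g)) :=
      hdom.2 _ hrest (by simp)
    have hge : 0 ≤ vP ν g := hdom.1 _ hgne
    have hle : vP ν g ≤ 0 := by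
      have hdecomp : (algebraMap (Poly K) (RF K)) (MvPolynomial.C (MvPolynomial.constantCoeff g))
          = (algebraMap (Poly K) (RF K)) g +
            (-(algebraMap (Poly K) (RF K) (g - MvPolynomial.C (MvPolynomial.constantCoeff g)))) := by
        rw [← map_neg, ← map_add]; ring_nf
      have hmin := ν.v_add _ _ (aMap_ne hgne)
        (neg_ne_zero.2 (aMap_ne hrest)) (by rw [← hdecomp]; exact aMap_ne (by simpa using hg))
      rw [← hdecomp] at hmin
      have hvneg : ν.v (-(algebraMap (Poly K) (RF K) (g - MvPolynomial.C (MvPolynomial.constantCoeff g))))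
          = vP ν (g - MvPolynomial.C (MvPolynomial.constantCoeff g)) :=
        v_neg ν _ (aMap_ne hrest)
      rw [hvneg] at hmin
      have : min (vP ν g) (vP ν (g - MvPolynomial.C (MvPolynomial.constantCoeff g))) ≤ 0 := by
        calc _ ≤ vP ν (MvPolynomial.C (MvPolynomial.constantCoeff g)) := hmin
        _ = 0 := hC
      cases le_or_gt (vP ν g) (vP ν (g - MvPolynomial.C (MvPolynomial.constantCoeff g))) with
      | inl h => rw [min_eq_left h] at this; exact this
      | inr h => rw [min_eq_right h.le] at this; linarith
    linarith

end Aux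
section Act

lemma act_act (u v u' v' : K) (f : Poly K) :
    act u v (act u' v' f) = act (u * u') (v * v') f := by
  have : (act u v).comp (act u' v') = act (u * u') (v * v') := by
    apply MvPolynomial.algHom_ext
    intro i
    fin_cases i <;>
      simp [act, MvPolynomial.aeval_X, map_mul, MvPolynomial.algHom_C] <;> ring
  calc act u v (act u' v' f) = ((act u v).comp (act u' v')) f := rfl
  _ = _ := by rw [this]

lemma act_one_one (f : Poly K) : act (1 : K) 1 f = f := by
  have : act (1 : K) 1 = AlgHom.id K (Poly K) := by
    apply MvPolynomial.algHom_ext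
    intro i
    fin_cases i <;> simp [act, MvPolynomial.aeval_X]
  rw [this]; rfl

lemma act_iter {u v lam : K} {f : Poly K} (h : act u v f = lam • f) (c : ℕ) :
    act (u ^ c) (v ^ c) f = lam ^ c • f := by
  induction c with
  | zero => simpa using act_one_one f
  | succ c ih =>
      have : act (u ^ (c + 1)) (v ^ (c + 1)) f = act (u ^ c) (v ^ c) (act u v f) := by
        rw [act_act, ← pow_succ, ← pow_succ]
      rw [this, h, map_smul, ih, smul_smul, ← pow_succ']

lemma eigen_unique {φ : Poly K →ₐ[K] Poly K} {f : Poly K} (hf : f ≠ 0) {a b : K}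
    (ha : φ f = a • f) (hb : φ f = b • f) : a = b := by
  have : (a - b) • f = 0 := by rw [sub_smul, ← ha, ← hb, sub_self]
  rcases smul_eq_zero.1 this with h | h
  · exact sub_eq_zero.1 h
  · exact absurd h hf

end Act

section Hsec
variable {m n : ℕ} {α β : K} {i j t x : ℕ}

lemma Hpow_one (hα : IsPrimitiveRoot α m)
    (hβ : IsPrimitiveRoot β n) {p : K × K} (hp : Hmem α β i j t x p) :
    p.1 ^ (m * n) = 1 ∧ p.2 ^ (m * n) = 1 := by
  obtain ⟨a, b, -, rfl⟩ := hp
  have hαm : α ^ (m : ℤ) = 1 := by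
    rw [zpow_natCast]; exact hα.pow_eq_one
  have hβn : β ^ (n : ℤ) = 1 := by
    rw [zpow_natCast]; exact hβ.pow_eq_one
  constructor
  · show (α ^ (a * (i : ℤ))) ^ (m * n) = 1
    rw [← zpow_natCast (α ^ (a * (i : ℤ))) (m * n), ← zpow_mul]
    have : a * (i : ℤ) * ((m : ℕ) * (n : ℕ) : ℕ) = (m : ℤ) * (a * i * n) := by push_cast; ring
    rw [this, zpow_mul, hαm, one_zpow]
  · show (β ^ (b * (j : ℤ))) ^ (m * n) = 1
    rw [← zpow_natCast (β ^ (b * (j : ℤ))) (m * n), ← zpow_mul]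
    have : b * (j : ℤ) * ((m : ℕ) * (n : ℕ) : ℕ) = (n : ℤ) * (b * j * m) := by push_cast; ring
    rw [this, zpow_mul, hβn, one_zpow]

lemma eigenvalue_pow_one (hm : 0 < m) (hn : 0 < n) (hα : IsPrimitiveRoot α m)
    (hβ : IsPrimitiveRoot β n) {p : K × K} (hp : Hmem α β i j t x p)
    {f : Poly K} (hf : f ≠ 0) {lam : K} (h : act p.1 p.2 f = lam • f) :
    lam ^ (m * n) = 1 := by
  obtain ⟨h1, h2⟩ := Hpow_one hα hβ hp
  have := act_iter h (m * n)
  rw [h1, h2, act_one_one] at this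
  have h0 : (lam ^ (m * n) - 1) • f = 0 := by
    rw [sub_smul, one_smul, ← this, sub_self]
  rcases smul_eq_zero.1 h0 with h' | h'
  · exact sub_eq_zero.1 h'
  · exact absurd h' hf

lemma invariant_mul {f g : Poly K} (hf : Invariant α β i j t x f)
    (hg : Invariant α β i j t x g) : Invariant α β i j t x (f * g) := by
  intro p hp; rw [map_mul, hf p hp, hg p hp]

lemma invariant_pow {f : Poly K} (hf : Invariant α β i j t x f) (c : ℕ) :
    Invariant α β i j t x (f ^ c) := by
  intro p hp; rw [map_pow, hf p hp]

lemma invariant_one : Invariant α β i j t x (1 : Poly K) := by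
  intro p hp; rw [map_one]

lemma invariant_prod {ι : Type*} (s : Finset ι) (f : ι → Poly K)
    (hf : ∀ y ∈ s, Invariant α β i j t x (f y)) :
    Invariant α β i j t x (∏ y ∈ s, f y) := by
  intro p hp
  rw [map_prod]
  exact Finset.prod_congr rfl fun y hy => hf y hy p hp

lemma invariant_pow_mn (hm : 0 < m) (hn : 0 < n) (hα : IsPrimitiveRoot α m)
    (hβ : IsPrimitiveRoot β n) {f : Poly K} (hf : f ≠ 0)
    (heig : IsEigen α β i j t x f) : Invariant α β i j t x (f ^ (m * n)) := by
  intro p hp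
  obtain ⟨lam, hlam⟩ := heig p hp
  rw [map_pow, hlam, smul_pow, eigenvalue_pow_one hm hn hα hβ hp hf hlam, one_smul]

end Hsec
section GSbasic
variable {ν : RatVal (RF K)} {G : GSData K}

lemma d_pos (hG : IsGenSeq ν G) (l : ℕ) : 0 < G.d l :=
  Finset.prod_pos fun k hk => hG.hmbar_pos k (Finset.mem_Icc.1 hk).1

lemma d_succ (hG : IsGenSeq ν G) {l : ℕ} (hl : 1 ≤ l) : G.d (l + 1) = G.d l * G.mbar l := by
  unfold GSData.d
  have h1 : l + 1 - 1 = (l - 1) + 1 := by omega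
  have h2 : l - 1 + 1 = l := by omega
  rw [h1, Finset.prod_Icc_succ_top (by omega : 1 ≤ l - 1 + 1), h2]

lemma coeff_top_zero {R : Poly K} {D : ℕ} (h : MvPolynomial.degreeOf 1 R < D) :
    MvPolynomial.coeff (Finsupp.single 1 D) R = 0 := by
  by_contra h'
  have := MvPolynomial.monomial_le_degreeOf 1 (MvPolynomial.mem_support_iff.2 h')
  simp [Finsupp.single_eq_same] at this
  omega

lemma coeff_Y_top (hG : IsGenSeq ν G) {l : ℕ} (hl : 1 ≤ l) :
    MvPolynomial.coeff (Finsupp.single 1 (G.d l)) (G.Q l) = 1 := by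
  have hX : MvPolynomial.coeff (Finsupp.single 1 (G.d l)) ((MvPolynomial.X 1 : Poly K) ^ G.d l) = 1 := by
    rw [MvPolynomial.coeff_X_pow]; simp
  rcases hG.hmonic l hl with h | h
  · have hQ : G.Q l = MvPolynomial.X 1 ^ G.d l := by
      have := sub_eq_zero.1 h; exact this
    rw [hQ, hX]
  · have h0 : MvPolynomial.coeff (Finsupp.single 1 (G.d l)) (G.Q l - MvPolynomial.X 1 ^ G.d l) = 0 :=
      coeff_top_zero h
    rw [MvPolynomial.coeff_sub, hX] at h0
    exact sub_eq_zero.1 h0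

lemma Q_ne (hG : IsGenSeq ν G) (l : ℕ) : G.Q l ≠ 0 := by
  rcases Nat.eq_zero_or_pos l with rfl | hl
  · rw [hG.hQ0]
    exact MvPolynomial.X_ne_zero (R := K) (σ := Fin 2) 0
  · intro h0
    have h1 := coeff_Y_top hG hl
    rw [h0, MvPolynomial.coeff_zero] at h1
    exact one_ne_zero h1.symm

lemma degY_le (hG : IsGenSeq ν G) {l : ℕ} (hl : 1 ≤ l) :
    MvPolynomial.degreeOf 1 (G.Q l) ≤ G.d l := by
  have hXd : MvPolynomial.degreeOf 1 ((MvPolynomial.X 1 : Poly K) ^ G.d l) = G.d l := by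
    rw [MvPolynomial.X_pow_eq_monomial, MvPolynomial.degreeOf_monomial_eq _ _ (one_ne_zero)]
    simp
  rcases hG.hmonic l hl with h | h
  · rw [sub_eq_zero.1 h, hXd]
  · have heq : MvPolynomial.degreeOf 1 (G.Q l) =
        MvPolynomial.degreeOf 1 ((G.Q l - MvPolynomial.X 1 ^ G.d l) + MvPolynomial.X 1 ^ G.d l) := by
      congr 1; ring
    rw [heq]
    calc MvPolynomial.degreeOf 1 ((G.Q l - MvPolynomial.X 1 ^ G.d l) + MvPolynomial.X 1 ^ G.d l)
        ≤ max (MvPolynomial.degreeOf 1 (G.Q l - MvPolynomial.X 1 ^ G.d l))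
            (MvPolynomial.degreeOf 1 ((MvPolynomial.X 1 : Poly K) ^ G.d l)) :=
          MvPolynomial.degreeOf_add_le _ _ _
      _ ≤ G.d l := by rw [hXd]; exact max_le h.le le_rfl

lemma degreeOf_prod_le {ι : Type*} (iv : Fin 2) (s : Finset ι) (f : ι → Poly K) :
    MvPolynomial.degreeOf iv (∏ y ∈ s, f y) ≤ ∑ y ∈ s, MvPolynomial.degreeOf iv (f y) := by
  classical
  induction s using Finset.induction_on with
  | empty =>
      simp only [Finset.prod_empty, Finset.sum_empty]
      have : (1 : Poly K) = MvPolynomial.C 1 := by simp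
      rw [this, MvPolynomial.degreeOf_C]
  | @insert a s' hnot ih =>
      rw [Finset.prod_insert hnot, Finset.sum_insert hnot]
      calc MvPolynomial.degreeOf iv (f a * ∏ y ∈ s', f y)
          ≤ MvPolynomial.degreeOf iv (f a) + MvPolynomial.degreeOf iv (∏ y ∈ s', f y) :=
            MvPolynomial.degreeOf_mul_le _ _ _
        _ ≤ _ := by omega

lemma tele (hG : IsGenSeq ν G) : ∀ l, 1 ≤ l →
    (∑ k ∈ Finset.Icc 1 (l - 1), (G.mbar k - 1) * G.d k) + 1 = G.d l := by
  intro l hl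
  induction l, hl using Nat.le_induction with
  | base => simp [GSData.d]
  | succ l hl ih =>
      have h1 : l + 1 - 1 = (l - 1) + 1 := by omega
      have h2 : l - 1 + 1 = l := by omega
      rw [h1, Finset.sum_Icc_succ_top (by omega : 1 ≤ l - 1 + 1), h2]
      have hm := hG.hmbar_pos l hl
      obtain ⟨m', hm'⟩ : ∃ m', G.mbar l = m' + 1 := ⟨G.mbar l - 1, by omega⟩
      rw [d_succ hG hl, hm']
      simp only [Nat.add_sub_cancel]
      have hexp : G.d l * (m' + 1) = m' * G.d l + G.d l := by ring
      omega
      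
lemma mon_deg (hG : IsGenSeq ν G) {l : ℕ} (hl : 1 ≤ l) (cc : ℕ → ℕ)
    (hcc : ∀ k, 1 ≤ k → k < l → cc k < G.mbar k) :
    MvPolynomial.degreeOf 1 (∏ k ∈ Finset.range l, G.Q k ^ cc k) < G.d (l + 1) := by
  have hsplit : Finset.range l = insert 0 (Finset.Icc 1 (l - 1)) := by
    ext k; simp [Finset.mem_range, Finset.mem_Icc, Finset.mem_insert]; omega
  have h0 : MvPolynomial.degreeOf 1 (G.Q 0 ^ cc 0) = 0 := by
    rw [hG.hQ0]
    have := MvPolynomial.degreeOf_pow_le 1 (MvPolynomial.X 0 : Poly K) (cc 0)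
    have hX0 : MvPolynomial.degreeOf 1 (MvPolynomial.X 0 : Poly K) = 0 := by
      rw [MvPolynomial.degreeOf_X]; simp
    rw [hX0, Nat.mul_zero] at this
    omega
  have hbound : MvPolynomial.degreeOf 1 (∏ k ∈ Finset.range l, G.Q k ^ cc k)
      ≤ ∑ k ∈ Finset.Icc 1 (l - 1), (G.mbar k - 1) * G.d k := by
    calc MvPolynomial.degreeOf 1 (∏ k ∈ Finset.range l, G.Q k ^ cc k)
        ≤ ∑ k ∈ Finset.range l, MvPolynomial.degreeOf 1 (G.Q k ^ cc k) :=
          degreeOf_prod_le 1 _ _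
      _ = ∑ k ∈ Finset.Icc 1 (l - 1), MvPolynomial.degreeOf 1 (G.Q k ^ cc k) := by
          rw [hsplit, Finset.sum_insert (by simp), h0, zero_add]
      _ ≤ ∑ k ∈ Finset.Icc 1 (l - 1), (G.mbar k - 1) * G.d k := by
          apply Finset.sum_le_sum
          intro k hk
          rw [Finset.mem_Icc] at hk
          have hk1 : 1 ≤ k := hk.1
          have hkl : k < l := by omega
          calc MvPolynomial.degreeOf 1 (G.Q k ^ cc k)
              ≤ cc k * MvPolynomial.degreeOf 1 (G.Q k) := MvPolynomial.degreeOf_pow_le _ _ _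
            _ ≤ cc k * G.d k := Nat.mul_le_mul_left _ (degY_le hG hk1)
            _ ≤ (G.mbar k - 1) * G.d k := Nat.mul_le_mul_right _ (by
                have := hcc k hk1 hkl; omega)
  have htele := tele hG l hl
  have hd : G.d l ≤ G.d (l + 1) := by
    rw [d_succ hG hl]
    have := hG.hmbar_pos l hl
    nlinarith [d_pos hG l]
  omega

end GSbasic
section GSval
variable {ν : RatVal (RF K)} {G : GSData K}

lemma γ_pos (hG : IsGenSeq ν G) (hdom : DominatesRm ν) : ∀ l, 0 < G.γ ν l := by
  have h1 : ∀ l, 1 ≤ l → 0 < G.γ ν l := by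
    intro l hl
    induction l, hl using Nat.le_induction with
    | base =>
        show 0 < vP ν (G.Q 1)
        rw [hG.hQ1]
        exact hdom.2 _ (MvPolynomial.X_ne_zero (R := K) (σ := Fin 2) 1) (by simp)
    | succ l hl ih =>
        have hgr := hG.hgrowth l hl
        have hm : (1 : ℚ) ≤ (G.mbar l : ℚ) := by
          exact_mod_cast hG.hmbar_pos l hl
        nlinarith
  intro l
  rcases Nat.eq_zero_or_pos l with rfl | hl
  · show 0 < vP ν (G.Q 0)
    rw [hG.hQ0]
    exact hdom.2 _ (MvPolynomial.X_ne_zero (R := K) (σ := Fin 2) 0) (by simp)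
  · exact h1 l hl

lemma γ_step (hG : IsGenSeq ν G) (hdom : DominatesRm ν) {l : ℕ} (hl : 1 ≤ l) :
    G.γ ν l < G.γ ν (l + 1) := by
  have hgr := hG.hgrowth l hl
  have hm : (1 : ℚ) ≤ (G.mbar l : ℚ) := by exact_mod_cast hG.hmbar_pos l hl
  nlinarith [γ_pos hG hdom l]

lemma γ_mono (hG : IsGenSeq ν G) (hdom : DominatesRm ν) {l l' : ℕ} (hl : 1 ≤ l)
    (h : l ≤ l') : G.γ ν l ≤ G.γ ν l' := by
  induction l', h using Nat.le_induction with
  | base => exact le_rfl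
  | succ l' hll ih => exact ih.trans (γ_step hG hdom (le_trans hl hll)).le

lemma γ_lt (hG : IsGenSeq ν G) (hdom : DominatesRm ν) {l k : ℕ} (hl : 1 ≤ l)
    (h : l < k) : G.γ ν l < G.γ ν k :=
  lt_of_lt_of_le (γ_step hG hdom hl) (γ_mono hG hdom (by omega) h)

lemma evalγ_add (e e' : ℕ →₀ ℕ) :
    evalγ ν G (e + e') = evalγ ν G e + evalγ ν G e' := by
  unfold evalγ
  apply Finsupp.sum_add_index' (fun k => by simp) (fun k b₁ b₂ => by push_cast; ring)

lemma Pmon_ne (hG : IsGenSeq ν G) (e : ℕ →₀ ℕ) : Pmon G e ≠ 0 := by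
  unfold Pmon Finsupp.prod
  exact Finset.prod_ne_zero_iff.2 fun k _ => pow_ne_zero _ (Q_ne hG k)

lemma vP_Pmon (hG : IsGenSeq ν G) (e : ℕ →₀ ℕ) : vP ν (Pmon G e) = evalγ ν G e := by
  unfold Pmon Finsupp.prod evalγ Finsupp.sum
  rw [vP_prod ν _ _ fun k _ => pow_ne_zero _ (Q_ne hG k)]
  exact Finset.sum_congr rfl fun k _ => vP_pow ν (Q_ne hG k) _

lemma evalγ_rep (e : ℕ →₀ ℕ) : evalγ ν G e = ∑ k ∈ e.support, (e k : ℚ) * G.γ ν k := rfl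

lemma rep_unique (hG : IsGenSeq ν G) (hdom : DominatesRm ν) {l : ℕ} (hl : 1 ≤ l)
    (h2 : 2 ≤ G.mbar l) {e : ℕ →₀ ℕ} (he : evalγ ν G e = G.γ ν l) :
    e = Finsupp.single l 1 := by
  have hterm : ∀ k, 0 ≤ (e k : ℚ) * G.γ ν k :=
    fun k => mul_nonneg (by positivity) (γ_pos hG hdom k).le
  have hsub : ∀ T : Finset ℕ, T ⊆ e.support →
      (∑ k ∈ T, (e k : ℚ) * G.γ ν k) ≤ evalγ ν G e := by
    intro T hT
    rw [evalγ_rep]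
    exact Finset.sum_le_sum_of_subset_of_nonneg hT fun k _ _ => hterm k
  have hle : ∀ k ∈ e.support, k ≤ l := by
    intro k hk
    by_contra hkl
    push_neg at hkl
    have h1 : G.γ ν l < G.γ ν k := γ_lt hG hdom hl hkl
    have h2 : (e k : ℚ) * G.γ ν k ≤ evalγ ν G e := by
      have := hsub {k} (Finset.singleton_subset_iff.2 hk)
      simpa using this
    have h3 : 1 ≤ (e k : ℚ) := by
      exact_mod_cast Nat.one_le_iff_ne_zero.2 (Finsupp.mem_support_iff.1 hk)
    nlinarith [γ_pos hG hdom k]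
  have hel : e l ≤ 1 := by
    by_contra h'
    push_neg at h'
    have hkmem : l ∈ e.support := Finsupp.mem_support_iff.2 (by omega)
    have h2' : (e l : ℚ) * G.γ ν l ≤ evalγ ν G e := by
      have := hsub {l} (Finset.singleton_subset_iff.2 hkmem)
      simpa using this
    have : (2 : ℚ) ≤ (e l : ℚ) := by exact_mod_cast h'
    nlinarith [γ_pos hG hdom l]
  rcases Nat.le_one_iff_eq_zero_or_eq_one.1 hel with h0 | h1
  · -- e l = 0 : representation from below, contradicts minimality of mbar
    exfalso
    have hsupp : e.support ⊆ Finset.range l := by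
      intro k hk
      rw [Finset.mem_range]
      have := hle k hk
      rcases Nat.lt_or_ge k l with h | h
      · exact h
      · exfalso
        have : k = l := le_antisymm (hle k hk) h
        subst this
        exact Finsupp.mem_support_iff.1 hk h0
    have hrepr : (1 : ℚ) * G.γ ν l = ∑ k ∈ Finset.range l, ((e k : ℤ) : ℚ) * G.γ ν k := by
      rw [one_mul, ← he, evalγ_rep]
      rw [Finset.sum_subset hsupp]
      · exact Finset.sum_congr rfl fun k _ => by push_cast; ring
      · intro k _ hk
        rw [Finsupp.notMem_support_iff.1 hk]
        simp
    have := hG.hmbar_min l hl 1 one_pos ⟨fun k => (e k : ℤ), hrepr⟩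
    omega
  · -- e l = 1 : support is exactly {l}
    have hsupp : e.support ⊆ {l} := by
      intro k hk
      rw [Finset.mem_singleton]
      by_contra hkl
      have hklt : k < l := lt_of_le_of_ne (hle k hk) hkl
      have hlmem : l ∈ e.support := Finsupp.mem_support_iff.2 (by omega)
      have hpair : ({k, l} : Finset ℕ) ⊆ e.support := by
        intro y hy
        rcases Finset.mem_insert.1 hy with rfl | hy
        · exact hk
        · rw [Finset.mem_singleton.1 hy]; exact hlmem
      have := hsub _ hpair
      rw [Finset.sum_pair hkl] at this
      rw [he] at this
      have h3 : 1 ≤ (e k : ℚ) := by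
        exact_mod_cast Nat.one_le_iff_ne_zero.2 (Finsupp.mem_support_iff.1 hk)
      have h4 : (e l : ℚ) = 1 := by exact_mod_cast h1
      nlinarith [γ_pos hG hdom k, γ_pos hG hdom l]
    ext k
    rcases eq_or_ne k l with rfl | hkl
    · simp [h1, Finsupp.single_eq_same]
    · rw [Finsupp.single_eq_of_ne' (Ne.symm hkl)]
      by_contra h'
      have : k ∈ e.support := Finsupp.mem_support_iff.2 h'
      exact hkl (Finset.mem_singleton.1 (hsupp this))

end GSval
section GSnd
variable {ν : RatVal (RF K)} {G : GSData K}

/-- Any nonzero polynomial's value is the value of some admissible exponent. -/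
lemma val_exists (hG : IsGenSeq ν G) {f : Poly K} (hf : f ≠ 0) :
    ∃ e : ℕ →₀ ℕ, Adm G e ∧ vP ν f = evalγ ν G e := by
  obtain ⟨c, ⟨hadm, hrep⟩, -⟩ := hG.hexpand f hf
  obtain ⟨-, e₀, hmem, heq, -⟩ := hG.hval f hf c hadm hrep
  exact ⟨e₀, hadm e₀ hmem, heq⟩

lemma mbar_two_io (hG : IsGenSeq ν G) (hnd : Nondiscrete ν) :
    ∀ L : ℕ, ∃ l, L ≤ l ∧ 1 ≤ l ∧ 2 ≤ G.mbar l := by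
  intro L
  by_contra hcon
  push_neg at hcon
  apply hnd
  set L' := max L 1 with hL'
  have hml : ∀ l, L' ≤ l → G.mbar l = 1 := by
    intro l hl
    have h1 : 1 ≤ l := le_trans (le_max_right L 1) hl
    have := hcon l (le_trans (le_max_left L 1) hl) h1
    have := hG.hmbar_pos l h1
    omega
  set D : ℕ := ∏ k ∈ Finset.range (L' + 1), (G.γ ν k).den with hD
  have hDpos : 0 < D := Finset.prod_pos fun k _ => (G.γ ν k).pos
  set S : Set ℚ := {q | ∃ z : ℤ, q * (D : ℚ) = (z : ℚ)} with hS
  have hSadd : ∀ q q', q ∈ S → q' ∈ S → q + q' ∈ S := by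
    rintro q q' ⟨z, hz⟩ ⟨z', hz'⟩
    exact ⟨z + z', by push_cast; rw [add_mul, hz, hz']⟩
  have hSzero : (0 : ℚ) ∈ S := ⟨0, by simp⟩
  have hSzmul : ∀ (z : ℤ) (q : ℚ), q ∈ S → (z : ℚ) * q ∈ S := by
    rintro z q ⟨w, hw⟩
    exact ⟨z * w, by push_cast; rw [mul_assoc, hw]⟩
  have hSsum : ∀ (s : Finset ℕ) (f : ℕ → ℚ), (∀ k ∈ s, f k ∈ S) → (∑ k ∈ s, f k) ∈ S := by
    intro s f hfs
    classical
    induction s using Finset.induction_on with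
    | empty => simpa using hSzero
    | @insert a s' hnot ih =>
        rw [Finset.sum_insert hnot]
        exact hSadd _ _ (hfs a (Finset.mem_insert_self a s'))
          (ih fun k hk => hfs k (Finset.mem_insert_of_mem hk))
  have hγS : ∀ k, G.γ ν k ∈ S := by
    intro k
    induction k using Nat.strong_induction_on with
    | _ k ih =>
        rcases Nat.lt_or_ge k (L' + 1) with hk | hk
        · -- small indices: denominator divides D
          have hdvd : (G.γ ν k).den ∣ D := Finset.dvd_prod_of_mem _ (Finset.mem_range.2 hk)
          obtain ⟨w, hw⟩ := hdvd
          refine ⟨(G.γ ν k).num * w, ?_⟩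
          rw [hw]
          push_cast
          rw [← mul_assoc]
          rw [Rat.mul_den_eq_num]
        · -- large indices: mbar = 1 gives a representation from below
          have hk1 : 1 ≤ k := by omega
          obtain ⟨c, hc⟩ := hG.hmbar_mem k hk1
          rw [hml k (by omega), Nat.cast_one, one_mul] at hc
          rw [hc]
          exact hSsum _ _ fun j hj =>
            hSzmul (c j) _ (ih j (Finset.mem_range.1 hj))
  -- every nonzero polynomial value lies in S
  have hvalS : ∀ f : Poly K, f ≠ 0 → vP ν f ∈ S := by
    intro f hf
    obtain ⟨e, -, he⟩ := val_exists hG hf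
    rw [he, evalγ_rep]
    exact hSsum _ _ fun k _ => by
      have := hSzmul (e k : ℤ) _ (hγS k)
      push_cast at this ⊢
      exact this
  refine ⟨(D : ℚ)⁻¹, fun z hz => ?_⟩
  obtain ⟨f, g, hgne, rfl⟩ : ∃ f g : Poly K, g ≠ 0 ∧
      z = algebraMap (Poly K) (RF K) f / algebraMap (Poly K) (RF K) g := by
    obtain ⟨f, g, hg, rfl⟩ := IsFractionRing.div_surjective (A := Poly K) z
    exact ⟨f, g, nonZeroDivisors.ne_zero hg, rfl⟩
  have hfne : f ≠ 0 := by
    intro h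
    apply hz
    rw [h]; simp
  obtain ⟨z1, hz1⟩ := hvalS f hfne
  obtain ⟨z2, hz2⟩ := hvalS g hgne
  refine ⟨z1 - z2, ?_⟩
  have hvdiv : ν.v (algebraMap (Poly K) (RF K) f / algebraMap (Poly K) (RF K) g)
      = vP ν f - vP ν g := by
    have hgim : algebraMap (Poly K) (RF K) g ≠ 0 := aMap_ne hgne
    have hzz : algebraMap (Poly K) (RF K) f / algebraMap (Poly K) (RF K) g ≠ 0 := hz
    have := ν.v_mul _ _ hzz hgim
    rw [div_mul_cancel₀ _ hgim] at this
    unfold vP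
    linarith
  rw [hvdiv]
  have hD0 : (D : ℚ) ≠ 0 := by positivity
  field_simp
  push_cast
  linarith [hz1, hz2]

lemma γ_unbounded (hG : IsGenSeq ν G) (hdom : DominatesRm ν) (hnd : Nondiscrete ν) :
    ∀ B : ℚ, ∃ l, 1 ≤ l ∧ B < G.γ ν l := by
  have key : ∀ c : ℕ, ∃ l, 1 ≤ l ∧ (c : ℚ) * G.γ ν 1 < G.γ ν l := by
    intro c
    induction c with
    | zero => exact ⟨1, le_rfl, by simpa using γ_pos hG hdom 1⟩
    | succ c ih =>
        obtain ⟨l, hl1, hlt⟩ := ih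
        obtain ⟨l', hll', hl'1, h2m⟩ := mbar_two_io hG hnd l
        refine ⟨l' + 1, by omega, ?_⟩
        have h1 : G.γ ν l ≤ G.γ ν l' := γ_mono hG hdom hl1 hll'
        have h2 : G.γ ν 1 ≤ G.γ ν l' := γ_mono hG hdom le_rfl hl'1
        have h3 := hG.hgrowth l' hl'1
        have h4 : (2 : ℚ) ≤ (G.mbar l' : ℚ) := by exact_mod_cast h2m
        have h5 := γ_pos hG hdom l'
        push_cast
        nlinarith
  intro B
  obtain ⟨c, hc⟩ := exists_nat_gt (B / G.γ ν 1)
  obtain ⟨l, hl1, hlt⟩ := key c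
  refine ⟨l, hl1, lt_trans ?_ hlt⟩
  have hγ1 := γ_pos hG hdom 1
  rw [div_lt_iff₀ hγ1] at hc
  linarith

end GSnd
section Eig
variable {ν : RatVal (RF K)} {G : GSData K} {α β : K} {i j t x : ℕ}

lemma act_C (p : K × K) (a : K) : act p.1 p.2 (MvPolynomial.C a) = MvPolynomial.C a := by
  simp [act, MvPolynomial.aeval_C, MvPolynomial.algebraMap_eq]

lemma eig_prod (heig : ∀ l, IsEigen α β i j t x (G.Q l)) {p : K × K}
    (hp : Hmem α β i j t x p) (s : Finset ℕ) (cc : ℕ → ℕ) :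
    ∃ lam : K, act p.1 p.2 (∏ k ∈ s, G.Q k ^ cc k) = lam • ∏ k ∈ s, G.Q k ^ cc k := by
  classical
  induction s using Finset.induction_on with
  | empty => exact ⟨1, by simp⟩
  | @insert a s' hnot ih =>
      obtain ⟨lam', hlam'⟩ := ih
      obtain ⟨lama, hlama⟩ := heig a p hp
      refine ⟨lama ^ cc a * lam', ?_⟩
      rw [Finset.prod_insert hnot, map_mul, map_pow, hlama, hlam']
      rw [smul_pow, MvPolynomial.smul_eq_C_mul, MvPolynomial.smul_eq_C_mul,
        MvPolynomial.smul_eq_C_mul, MvPolynomial.C_mul]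
      ring

lemma eig_Pmon (heig : ∀ l, IsEigen α β i j t x (G.Q l)) {p : K × K}
    (hp : Hmem α β i j t x p) (e : ℕ →₀ ℕ) :
    ∃ lam : K, act p.1 p.2 (Pmon G e) = lam • Pmon G e :=
  eig_prod heig hp e.support e

/-- The minimal term in the expansion of a nonzero invariant polynomial is an invariant
monomial in the `Q`'s. -/
lemma invariant_val (hG : IsGenSeq ν G) (heig : ∀ l, IsEigen α β i j t x (G.Q l))
    {h : Poly K} (hne : h ≠ 0) (hinv : Invariant α β i j t x h) :
    ∃ e : ℕ →₀ ℕ, Adm G e ∧ vP ν h = evalγ ν G e ∧ Invariant α β i j t x (Pmon G e) := by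
  classical
  obtain ⟨c, ⟨hadm, hrep⟩, huniq⟩ := hG.hexpand h hne
  obtain ⟨-, e₀, hmem, heq, -⟩ := hG.hval h hne c hadm hrep
  refine ⟨e₀, hadm _ hmem, heq, ?_⟩
  intro p hp
  choose χ hχ using fun e => eig_Pmon heig hp e
  set c' : (ℕ →₀ ℕ) →₀ K := c.sum (fun e a => Finsupp.single e (a * χ e)) with hc'
  have hsupp : c'.support ⊆ c.support := by
    rw [hc']
    refine Finset.Subset.trans Finsupp.support_sum ?_
    intro y hy
    rw [Finset.mem_biUnion] at hy
    obtain ⟨e, he, hye⟩ := hy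
    have := Finsupp.support_single_subset hye
    rwa [Finset.mem_singleton.1 this]
  have key : c'.sum (fun e a => MvPolynomial.C a * Pmon G e) = h := by
    have e1 : c'.sum (fun e a => MvPolynomial.C a * Pmon G e)
        = c.sum fun e a => MvPolynomial.C (a * χ e) * Pmon G e := by
      rw [hc', Finsupp.sum_sum_index
        (fun e => by rw [MvPolynomial.C_0, zero_mul])
        (fun e b1 b2 => by rw [MvPolynomial.C_add, add_mul])]
      refine Finsupp.sum_congr fun e _ => ?_
      exact Finsupp.sum_single_index (by rw [MvPolynomial.C_0, zero_mul])
    have e2 : act p.1 p.2 h = c.sum fun e a => MvPolynomial.C (a * χ e) * Pmon G e := by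
      rw [hrep, map_finsuppSum]
      refine Finsupp.sum_congr fun e _ => ?_
      rw [map_mul, act_C, hχ e, MvPolynomial.smul_eq_C_mul, MvPolynomial.C_mul]
      ring
    rw [e1, ← e2, hinv p hp]
  have hc'eq : c' = c := huniq c' ⟨fun e he => hadm e (hsupp he), key.symm⟩
  have happ : c' e₀ = c e₀ * χ e₀ := by
    rw [hc', Finsupp.sum_apply]
    rw [Finsupp.sum]
    rw [Finset.sum_eq_single e₀]
    · rw [Finsupp.single_eq_same]
    · intro e _ hne'
      rw [Finsupp.single_apply, if_neg hne']
    · intro h'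
      rw [Finsupp.notMem_support_iff.1 h', zero_mul, Finsupp.single_apply]
      simp
  have hce : c e₀ ≠ 0 := Finsupp.mem_support_iff.1 hmem
  have hmul : c e₀ * 1 = c e₀ * χ e₀ := by
    rw [mul_one]
    conv_lhs => rw [← hc'eq]
    exact happ
  have hχ1 : χ e₀ = 1 := (mul_left_cancel₀ hce hmul).symm
  rw [hχ e₀, hχ1, one_smul]

/-- Invariance propagates up the generating sequence. -/
lemma inv_succ (hG : IsGenSeq ν G) (heig : ∀ l, IsEigen α β i j t x (G.Q l))
    {l : ℕ} (hl : 1 ≤ l) (hinv : Invariant α β i j t x (G.Q l)) :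
    Invariant α β i j t x (G.Q (l + 1)) := by
  obtain ⟨lam, hlam0, cc, hcc, hQrec, -⟩ := hG.hrec l hl
  intro p hp
  obtain ⟨μ, hμ⟩ := heig (l + 1) p hp
  obtain ⟨χ, hχm⟩ := eig_prod heig hp (Finset.range l) cc
  set mon := ∏ k ∈ Finset.range l, G.Q k ^ cc k with hmon
  have hμ' : act p.1 p.2 (G.Q (l + 1)) = MvPolynomial.C μ * G.Q (l + 1) := by
    rw [hμ, MvPolynomial.smul_eq_C_mul]
  have hχ' : act p.1 p.2 mon = MvPolynomial.C χ * mon := by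
    rw [hχm, MvPolynomial.smul_eq_C_mul]
  have h1 : MvPolynomial.C μ * G.Q (l + 1)
      = G.Q l ^ G.mbar l - MvPolynomial.C lam * (MvPolynomial.C χ * mon) := by
    rw [← hμ', hQrec, map_sub, map_pow, hinv p hp, map_mul, act_C (a := lam), hχ']
  have key : MvPolynomial.C μ * G.Q (l + 1) - G.Q (l + 1)
      = MvPolynomial.C lam * mon - MvPolynomial.C lam * (MvPolynomial.C χ * mon) := by
    linear_combination h1 - hQrec
  suffices hμ1 : μ = 1 by rw [hμ, hμ1, one_smul]
  by_contra hne
  have hcoefQ : MvPolynomial.coeff (Finsupp.single 1 (G.d (l + 1))) (G.Q (l + 1)) = 1 :=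
    coeff_Y_top hG (by omega)
  have hcoefmon : MvPolynomial.coeff (Finsupp.single 1 (G.d (l + 1))) mon = 0 :=
    coeff_top_zero (mon_deg hG hl cc hcc)
  have hco := congrArg (MvPolynomial.coeff (Finsupp.single 1 (G.d (l + 1)))) key
  simp only [MvPolynomial.coeff_sub, MvPolynomial.coeff_C_mul, hcoefQ, hcoefmon,
    mul_one, mul_zero, sub_zero] at hco
  exact hne (sub_eq_zero.1 hco)

lemma inv_tail (hG : IsGenSeq ν G) (heig : ∀ l, IsEigen α β i j t x (G.Q l))
    {l₀ : ℕ} (hl : 1 ≤ l₀) (h : Invariant α β i j t x (G.Q l₀)) :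
    ∀ r, l₀ ≤ r → Invariant α β i j t x (G.Q r) := by
  intro r hr
  induction r, hr using Nat.le_induction with
  | base => exact h
  | succ r hr ih => exact inv_succ hG heig (le_trans hl hr) ih

end Eig
section MainAux
variable {ν : RatVal (RF K)} {G : GSData K} {α β : K} {i j t x : ℕ}

lemma mem_SRm (hdom : DominatesRm ν) {f : Poly K} (hf : f ≠ 0) : vP ν f ∈ SRm ν :=
  ⟨f, 1, hf, by simp, by rw [vP_one]; ring⟩

lemma SRm_val (hdom : DominatesRm ν) {q : ℚ} (hq : q ∈ SRm ν) :
    ∃ f : Poly K, f ≠ 0 ∧ q = vP ν f := by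
  obtain ⟨f, g, hf, hg, rfl⟩ := hq
  exact ⟨f, hf, by rw [vP_unit hdom hg, sub_zero]⟩

lemma mem_SA (hdom : DominatesRm ν) {f : Poly K} (hf : f ≠ 0)
    (hinv : Invariant α β i j t x f) : vP ν f ∈ SA ν α β i j t x :=
  ⟨f, 1, hf, hinv, invariant_one, by simp, by rw [vP_one]; ring⟩

lemma SA_val (hdom : DominatesRm ν) {q : ℚ} (hq : q ∈ SA ν α β i j t x) :
    ∃ f : Poly K, f ≠ 0 ∧ Invariant α β i j t x f ∧ q = vP ν f := by
  obtain ⟨f, g, hf, hfi, -, hg, rfl⟩ := hq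
  exact ⟨f, hf, hfi, by rw [vP_unit hdom hg, sub_zero]⟩

lemma evalγ_zero : evalγ ν G 0 = 0 := by
  unfold evalγ; simp

lemma Pmon_single (l : ℕ) : Pmon G (Finsupp.single l 1) = G.Q l := by
  unfold Pmon
  rw [Finsupp.prod_single_index (by rw [pow_zero])]
  rw [pow_one]

end MainAux

/-- finite generation of the semigroup iff the tail of the generating
sequence consists of invariants. -/
theorem stmt_5 (K : Type) [Field K] [IsAlgClosed K] [CharZero K]
    (m n : ℕ) (hm : 0 < m) (hn : 0 < n) (α β : K)
    (hα : IsPrimitiveRoot α m) (hβ : IsPrimitiveRoot β n)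
    (i j t x : ℕ) (hi : 0 < i) (hj : 0 < j) (ht : 0 < t)
    (him : i ∣ m) (hjn : j ∣ n) (hti : t ∣ m / i) (htj : t ∣ n / j)
    (hxt : Nat.gcd x t = 1) (hx1 : 1 ≤ x) (hxle : x ≤ t)
    (ν : RatVal (RF K)) (hdom : DominatesRm ν) (hnd : Nondiscrete ν)
    (G : GSData K) (hG : IsGenSeq ν G)
    (heig : ∀ l, IsEigen α β i j t x (G.Q l)) :
    FGover (SRm ν) (SA ν α β i j t x) ↔
      ∃ N : ℕ, 0 < N ∧ ∀ r, N ≤ r → Invariant α β i j t x (G.Q r) := by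
  constructor
  · -- finite generation forces an invariant tail
    intro hFG
    by_cases hex : ∃ l, 1 ≤ l ∧ Invariant α β i j t x (G.Q l)
    · obtain ⟨l, hl, hinv⟩ := hex
      exact ⟨l, hl, inv_tail hG heig hl hinv⟩
    · exfalso
      push_neg at hex
      obtain ⟨F, hFsub, hFeq⟩ := hFG
      have hFne : F.Nonempty := by
        by_contra hFe
        rw [Finset.not_nonempty_iff_eq_empty] at hFe
        have hF0 : vP ν (G.Q 1) ∈ SRm ν := mem_SRm hdom (Q_ne hG 1)
        rw [hFeq, hFe] at hF0
        simp at hF0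
      set B := F.max' hFne with hB
      obtain ⟨l₂, hl₂1, hl₂⟩ := γ_unbounded hG hdom hnd B
      obtain ⟨l, hll₂, hl1, h2m⟩ := mbar_two_io hG hnd l₂
      have hγB : B < G.γ ν l := lt_of_lt_of_le hl₂ (γ_mono hG hdom hl₂1 hll₂)
      have hγmem : G.γ ν l ∈ (F : Set ℚ) + SA ν α β i j t x := by
        rw [← hFeq]
        exact mem_SRm hdom (Q_ne hG l)
      obtain ⟨s, hs, σ, hσ, hsum⟩ := Set.mem_add.1 hγmem
      obtain ⟨fs, hfs, rfl⟩ := SRm_val hdom (hFsub hs)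
      obtain ⟨es, -, hes⟩ := val_exists hG hfs
      obtain ⟨fσ, hfσ, hfσinv, rfl⟩ := SA_val hdom hσ
      obtain ⟨e'', -, he''val, he''inv⟩ := invariant_val hG heig hfσ hfσinv
      have hrep : evalγ ν G (es + e'') = G.γ ν l := by
        rw [evalγ_add, ← hes, ← he''val, hsum]
      have heq1 : es + e'' = Finsupp.single l 1 := rep_unique hG hdom hl1 h2m hrep
      have hatl : es l + e'' l = 1 := by
        have := congrArg (fun u : ℕ →₀ ℕ => u l) heq1
        simpa [Finsupp.add_apply, Finsupp.single_eq_same] using this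
      have hother : ∀ k, k ≠ l → es k = 0 ∧ e'' k = 0 := by
        intro k hk
        have := congrArg (fun u : ℕ →₀ ℕ => u k) heq1
        simp [Finsupp.add_apply, Finsupp.single_apply, Ne.symm hk] at this
        omega
      rcases (by omega : e'' l = 1 ∧ es l = 0 ∨ e'' l = 0 ∧ es l = 1) with ⟨h1, -⟩ | ⟨h1, h2⟩
      · -- the invariant monomial is Q_l itself: contradiction with non-invariance
        have he''eq : e'' = Finsupp.single l 1 := by
          ext k
          rcases eq_or_ne k l with rfl | hk
          · rw [h1, Finsupp.single_eq_same]
          · rw [(hother k hk).2, Finsupp.single_apply, if_neg (Ne.symm hk)]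
        have hQinv : Invariant α β i j t x (G.Q l) := by
          rw [← Pmon_single l, ← he''eq]
          exact he''inv
        exact hex l hl1 hQinv
      · -- the F part is γ_l itself, which exceeds the maximum of F
        have he''0 : e'' = 0 := by
          ext k
          rcases eq_or_ne k l with rfl | hk
          · rw [h1]; rfl
          · rw [(hother k hk).2]; rfl
        have hσ0 : vP ν fσ = 0 := by rw [he''val, he''0, evalγ_zero]
        have hsB : vP ν fs ≤ B := F.le_max' _ hs
        rw [hσ0, add_zero] at hsum
        rw [hsum] at hsB
        exact absurd hsB (not_le.2 hγB)
  · -- an invariant tail gives finite generation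
    rintro ⟨N, hN, hinvN⟩
    classical
    have hmn0 : 0 < m * n := Nat.mul_pos hm hn
    set F : Finset ℚ :=
      Finset.image (fun b : Fin N → Fin (m * n) =>
        ∑ k : Fin N, ((b k : ℕ) : ℚ) * G.γ ν (k : ℕ)) Finset.univ with hF
    have hsum_val : ∀ b : Fin N → ℕ,
        (∑ k : Fin N, ((b k : ℕ) : ℚ) * G.γ ν (k : ℕ))
          = vP ν (∏ k : Fin N, G.Q (k : ℕ) ^ b k) := by
      intro b
      rw [vP_prod ν _ _ fun k _ => pow_ne_zero _ (Q_ne hG _)]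
      exact Finset.sum_congr rfl fun k _ => (vP_pow ν (Q_ne hG _) _).symm
    have hFS : (F : Set ℚ) ⊆ SRm ν := by
      intro q hq
      rw [Finset.mem_coe, hF, Finset.mem_image] at hq
      obtain ⟨b, -, rfl⟩ := hq
      rw [hsum_val fun k => (b k : ℕ)]
      exact mem_SRm hdom (Finset.prod_ne_zero_iff.2 fun k _ => pow_ne_zero _ (Q_ne hG _))
    refine ⟨F, hFS, Set.Subset.antisymm ?_ ?_⟩
    · -- SRm ⊆ F + SA
      intro q hq
      obtain ⟨f, hfne, rfl⟩ := SRm_val hdom hq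
      obtain ⟨e, -, he⟩ := val_exists hG hfne
      set b : Fin N → Fin (m * n) := fun k => ⟨e (k : ℕ) % (m * n), Nat.mod_lt _ hmn0⟩ with hb
      set h : Poly K :=
        (∏ k : Fin N, G.Q (k : ℕ) ^ (m * n * (e (k : ℕ) / (m * n)))) *
          ∏ k ∈ e.support.filter (fun k => ¬ k < N), G.Q k ^ e k with hh
      have hne1 : (∏ k : Fin N, G.Q (k : ℕ) ^ (m * n * (e (k : ℕ) / (m * n)))) ≠ 0 :=
        Finset.prod_ne_zero_iff.2 fun k _ => pow_ne_zero _ (Q_ne hG _)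
      have hne2 : (∏ k ∈ e.support.filter (fun k => ¬ k < N), G.Q k ^ e k) ≠ 0 :=
        Finset.prod_ne_zero_iff.2 fun k _ => pow_ne_zero _ (Q_ne hG _)
      have hhne : h ≠ 0 := mul_ne_zero hne1 hne2
      have hhinv : Invariant α β i j t x h := by
        apply invariant_mul
        · apply invariant_prod
          intro k _
          rw [pow_mul]
          exact invariant_pow (invariant_pow_mn hm hn hα hβ (Q_ne hG _) (heig _)) _
        · apply invariant_prod
          intro k hk
          have hkN : N ≤ k := by
            have := (Finset.mem_filter.1 hk).2
            omega
          exact invariant_pow (hinvN k hkN) _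
      have hhval : vP ν h =
          (∑ k : Fin N, ((m * n * (e (k : ℕ) / (m * n)) : ℕ) : ℚ) * G.γ ν (k : ℕ)) +
            ∑ k ∈ e.support.filter (fun k => ¬ k < N), (e k : ℚ) * G.γ ν k := by
        rw [hh, vP_mul ν hne1 hne2]
        congr 1
        · exact (hsum_val fun k => m * n * (e (k : ℕ) / (m * n))).symm
        · rw [vP_prod ν _ _ fun k _ => pow_ne_zero _ (Q_ne hG _)]
          exact Finset.sum_congr rfl fun k _ => vP_pow ν (Q_ne hG _) _
      refine Set.mem_add.2 ⟨∑ k : Fin N, ((e (k : ℕ) % (m * n) : ℕ) : ℚ) * G.γ ν (k : ℕ), ?_, vP ν h,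
        mem_SA hdom hhne hhinv, ?_⟩
      · rw [hF]
        refine Finset.mem_coe.2 (Finset.mem_image.2 ⟨b, Finset.mem_univ b, ?_⟩)
        rfl
      · -- the arithmetic identity
        rw [hhval, he, evalγ_rep]
        have hsplit := Finset.sum_filter_add_sum_filter_not e.support (fun k => k < N)
          (fun k => (e k : ℚ) * G.γ ν k)
        rw [← hsplit]
        have hlow : ∑ k ∈ e.support.filter (fun k => k < N), (e k : ℚ) * G.γ ν k
            = ∑ k ∈ Finset.range N, (e k : ℚ) * G.γ ν k := by
          apply Finset.sum_subset
          · intro k hk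
            rw [Finset.mem_range]
            exact (Finset.mem_filter.1 hk).2
          · intro k hkr hk
            have : e k = 0 := by
              by_contra h'
              exact hk (Finset.mem_filter.2 ⟨Finsupp.mem_support_iff.2 h', Finset.mem_range.1 hkr⟩)
            rw [this]
            simp
        have hfin : ∀ c : ℕ → ℚ, (∑ k : Fin N, c (k : ℕ)) = ∑ k ∈ Finset.range N, c k :=
          fun c => Fin.sum_univ_eq_sum_range c N
        have hmod : ∀ k : ℕ, (e k : ℚ) = ((e k % (m * n) : ℕ) : ℚ) +
            ((m * n * (e k / (m * n)) : ℕ) : ℚ) := by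
          intro k
          have hnat : e k = e k % (m * n) + m * n * (e k / (m * n)) := (Nat.mod_add_div (e k) (m * n)).symm
          exact_mod_cast hnat
        rw [hlow]
        rw [hfin fun k => ((e k % (m * n) : ℕ) : ℚ) * G.γ ν k,
          hfin fun k => ((m * n * (e k / (m * n)) : ℕ) : ℚ) * G.γ ν k]
        have hdist : ∑ k ∈ Finset.range N, (e k : ℚ) * G.γ ν k
            = ∑ k ∈ Finset.range N, (((e k % (m * n) : ℕ) : ℚ) * G.γ ν k +
                ((m * n * (e k / (m * n)) : ℕ) : ℚ) * G.γ ν k) := by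
          apply Finset.sum_congr rfl
          intro k _
          rw [hmod k]
          ring
        rw [hdist, Finset.sum_add_distrib]
        ring
    · -- F + SA ⊆ SRm
      rintro q hq
      obtain ⟨s, hs, σ, hσ, rfl⟩ := Set.mem_add.1 hq
      obtain ⟨fs, hfs, rfl⟩ := SRm_val hdom (hFS hs)
      obtain ⟨f2, g2, hf2, -, -, hg2, rfl⟩ := hσ
      exact ⟨fs * f2, g2, mul_ne_zero hfs hf2, hg2, by rw [vP_mul ν hfs hf2]; ring⟩

end DuttaPaper
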